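/- arXiv:2009.02845 — 2 statements merged into one kernel-verified Lean document; each statement's English description precedes it below -/
import Mathlib

section
/- Let X be a nonnegative real-valued random variable with mean μ and variance σ², and let c ≥ 0 be a constant. Then E[min{X, c}] ≥ min{c, μ/2}·(1 − 4σ²/(4σ² + μ²)). -/
open MeasureTheory ProbabilityTheory

/-!
On the event `X > μ/2` we have `min X c ≥ min c (μ/2)`, so Markov's inequality for the
nonnegative variable `min X c` gives `E[min X c] ≥ min c (μ/2) · P(X > μ/2)`. Cantelli's
inequality with deviation `μ/2` bounds `P(X ≤ μ/2)` by `σ² / (σ² + μ²/4) = 4σ² / (4σ² + μ²)`.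
-/

section

variable {Ω : Type*} [MeasurableSpace Ω] {μ : Measure Ω} [IsProbabilityMeasure μ] {X : Ω → ℝ}

theorem integral_sub_const_sq (hX : MemLp X 2 μ) (a : ℝ) :
    ∫ ω, (X ω - a) ^ 2 ∂μ = Var[X; μ] + (μ[X] - a) ^ 2 := by
  have hXa : MemLp (fun ω ↦ X ω - a) 2 μ := hX.sub (memLp_const a)
  have h := variance_eq_sub hXa
  rw [variance_sub_const hX.aestronglyMeasurable,
    integral_sub (hX.integrable one_le_two) (integrable_const a), integral_const] at h
  simp only [Pi.pow_apply, probReal_univ, one_smul] at h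
  linarith

theorem measureReal_le_sub_le_variance_div (hX : MemLp X 2 μ) {t : ℝ} (ht : 0 < t) :
    μ.real {ω | X ω ≤ μ[X] - t} ≤ Var[X; μ] / (Var[X; μ] + t ^ 2) := by
  set v := Var[X; μ]
  have hv : 0 ≤ v := variance_nonneg X μ
  -- Markov's inequality for `(X - μ[X] - s) ^ 2`; the shift `s = v / t` minimizes the bound.
  set s := v / t
  have hs : 0 ≤ s := by positivity
  have htail : {ω | X ω ≤ μ[X] - t} ⊆ {ω | (t + s) ^ 2 ≤ (X ω - (μ[X] + s)) ^ 2} := by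
    intro ω hω
    simp only [Set.mem_ofPred_eq] at hω ⊢
    nlinarith
  have hshift : MemLp (fun ω ↦ X ω - (μ[X] + s)) 2 μ := hX.sub (memLp_const _)
  have hmarkov := mul_meas_ge_le_integral_of_nonneg (ae_of_all μ fun ω ↦ sq_nonneg _)
    hshift.integrable_sq ((t + s) ^ 2)
  rw [integral_sub_const_sq hX] at hmarkov
  have hbound : (t + s) ^ 2 * μ.real {ω | X ω ≤ μ[X] - t} ≤ v + s ^ 2 :=
    (mul_le_mul_of_nonneg_left (measureReal_mono htail) (sq_nonneg _)).trans (by linarith)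
  calc μ.real {ω | X ω ≤ μ[X] - t} ≤ (v + s ^ 2) / (t + s) ^ 2 := by
        rw [le_div_iff₀ (by positivity)]; linarith
    _ = v / (v + t ^ 2) := by simp only [s]; field_simp; ring

theorem min_mul_one_sub_measureReal_le_integral_min (hX0 : 0 ≤ᵐ[μ] X)
    (hX : AEStronglyMeasurable X μ) {a c : ℝ} (ha : 0 ≤ a) (hc : 0 ≤ c) :
    min c a * (1 - μ.real {ω | X ω ≤ a}) ≤ ∫ ω, min (X ω) c ∂μ := by
  set m := min c a
  have hm : 0 ≤ m := le_min hc ha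
  have hcover : 1 ≤ μ.real {ω | X ω ≤ a} + μ.real {ω | m ≤ min (X ω) c} := by
    refine (probReal_univ (μ := μ)).symm.le.trans ((measureReal_mono fun ω _ ↦ ?_).trans
      (measureReal_union_le _ _))
    by_cases h : X ω ≤ a
    · exact Or.inl h
    · exact Or.inr (le_min ((min_le_right c a).trans (not_le.1 h).le) (min_le_left c a))
  have hmin0 : 0 ≤ᵐ[μ] fun ω ↦ min (X ω) c := hX0.mono fun ω h ↦ le_min h hc
  have hmin_int : Integrable (fun ω ↦ min (X ω) c) μ := by
    refine .of_bound (hX.aemeasurable.min aemeasurable_const).aestronglyMeasurable c ?_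
    filter_upwards [hmin0] with ω h
    rw [Real.norm_of_nonneg h]
    exact min_le_right _ _
  calc m * (1 - μ.real {ω | X ω ≤ a}) ≤ m * μ.real {ω | m ≤ min (X ω) c} :=
        mul_le_mul_of_nonneg_left (by linarith) hm
    _ ≤ ∫ ω, min (X ω) c ∂μ := mul_meas_ge_le_integral_of_nonneg hmin0 hmin_int m

end

theorem expectation_min_lower_bound
    {Ω : Type*} [MeasureSpace Ω] [IsProbabilityMeasure (ℙ : Measure Ω)]
    (X : Ω → ℝ) (hX : ∀ ω, 0 ≤ X ω) (hX2 : MemLp X 2 ℙ)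
    (c : ℝ) (hc : 0 ≤ c) :
    min c ((∫ ω, X ω) / 2) *
        (1 - 4 * variance X ℙ / (4 * variance X ℙ + (∫ ω, X ω) ^ 2)) ≤
      ∫ ω, min (X ω) c := by
  set m := ∫ ω, X ω
  set v := variance X ℙ
  have hm0 : 0 ≤ m := integral_nonneg hX
  obtain hm | hm := hm0.eq_or_lt
  · rw [← hm, zero_div, min_eq_right hc, zero_mul]
    exact integral_nonneg fun ω ↦ le_min (hX ω) hc
  have hcantelli : (ℙ : Measure Ω).real {ω | X ω ≤ m / 2} ≤ v / (v + (m / 2) ^ 2) := by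
    have h := measureReal_le_sub_le_variance_div hX2 (half_pos hm)
    rwa [sub_half] at h
  have hv : 4 * v / (4 * v + m ^ 2) = v / (v + (m / 2) ^ 2) := by
    have : 0 ≤ v := variance_nonneg X ℙ
    field_simp
    ring
  calc min c (m / 2) * (1 - 4 * v / (4 * v + m ^ 2))
      ≤ min c (m / 2) * (1 - (ℙ : Measure Ω).real {ω | X ω ≤ m / 2}) :=
        mul_le_mul_of_nonneg_left (by linarith) (le_min hc (by positivity))
    _ ≤ ∫ ω, min (X ω) c :=
        min_mul_one_sub_measureReal_le_integral_min (ae_of_all _ hX)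
          hX2.aestronglyMeasurable (by positivity) hc
end

section
/- If the optimization problem min over nonnegative matrices U ∈ ℝ₊^{m×k}, V ∈ ℝ₊^{n×k} of ‖M − UVᵀ‖_F has an optimal solution, then there exists a global optimal solution (Ū, V̄) satisfying the entrywise bounds Ū_{il} ≤ √(2‖M‖_F) and V̄_{jl} ≤ √(2‖M‖_F) for all i, j, l. -/
open Matrix

/-- Frobenius norm of a real matrix. -/
noncomputable def frob {m n : ℕ} (A : Matrix (Fin m) (Fin n) ℝ) : ℝ :=
  Real.sqrt (∑ i, ∑ j, (A i j) ^ 2)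

lemma frob_nonneg {m n : ℕ} (A : Matrix (Fin m) (Fin n) ℝ) : 0 ≤ frob A :=
  Real.sqrt_nonneg _

lemma abs_entry_le_frob {m n : ℕ} (A : Matrix (Fin m) (Fin n) ℝ) (i : Fin m) (j : Fin n) :
    |A i j| ≤ frob A := by
  rw [← Real.sqrt_sq_eq_abs]
  apply Real.sqrt_le_sqrt
  calc (A i j)^2 ≤ ∑ j', (A i j')^2 :=
        Finset.single_le_sum (f := fun j' => (A i j')^2) (fun _ _ => sq_nonneg _) (Finset.mem_univ j)
    _ ≤ ∑ i', ∑ j', (A i' j')^2 :=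
        Finset.single_le_sum (f := fun i' => ∑ j', (A i' j')^2)
          (fun _ _ => Finset.sum_nonneg fun _ _ => sq_nonneg _) (Finset.mem_univ i)

theorem exists_bounded_optimal_nmf (m n k : ℕ)
    (M : Matrix (Fin m) (Fin n) ℝ) (hM : ∀ i j, 0 ≤ M i j)
    (hopt : ∃ (Ustar : Matrix (Fin m) (Fin k) ℝ) (Vstar : Matrix (Fin n) (Fin k) ℝ),
      (∀ i l, 0 ≤ Ustar i l) ∧ (∀ j l, 0 ≤ Vstar j l) ∧
      ∀ (U : Matrix (Fin m) (Fin k) ℝ) (V : Matrix (Fin n) (Fin k) ℝ),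
        (∀ i l, 0 ≤ U i l) → (∀ j l, 0 ≤ V j l) →
        frob (M - Ustar * Vstarᵀ) ≤ frob (M - U * Vᵀ)) :
    ∃ (Ubar : Matrix (Fin m) (Fin k) ℝ) (Vbar : Matrix (Fin n) (Fin k) ℝ),
      (∀ i l, 0 ≤ Ubar i l) ∧ (∀ j l, 0 ≤ Vbar j l) ∧
      (∀ i l, Ubar i l ≤ Real.sqrt (2 * frob M)) ∧
      (∀ j l, Vbar j l ≤ Real.sqrt (2 * frob M)) ∧
      ∀ (U : Matrix (Fin m) (Fin k) ℝ) (V : Matrix (Fin n) (Fin k) ℝ),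
        (∀ i l, 0 ≤ U i l) → (∀ j l, 0 ≤ V j l) →
        frob (M - Ubar * Vbarᵀ) ≤ frob (M - U * Vᵀ) := by
  obtain ⟨U0, V0, hU0, hV0, hbest⟩ := hopt
  rcases Nat.eq_zero_or_pos m with hm | hm
  · subst hm
    refine ⟨0, 0, fun i l => le_rfl, fun j l => le_rfl,
      fun i l => Real.sqrt_nonneg _, fun j l => Real.sqrt_nonneg _, fun U V _ _ => ?_⟩
    have h1 : frob (M - (0 : Matrix (Fin 0) (Fin k) ℝ) * (0 : Matrix (Fin n) (Fin k) ℝ)ᵀ) = 0 := by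
      simp [frob]
    rw [h1]; exact frob_nonneg _
  rcases Nat.eq_zero_or_pos n with hn | hn
  · subst hn
    refine ⟨0, 0, fun i l => le_rfl, fun j l => le_rfl,
      fun i l => Real.sqrt_nonneg _, fun j l => Real.sqrt_nonneg _, fun U V _ _ => ?_⟩
    have h1 : frob (M - (0 : Matrix (Fin m) (Fin k) ℝ) * (0 : Matrix (Fin 0) (Fin k) ℝ)ᵀ) = 0 := by
      simp [frob]
    rw [h1]; exact frob_nonneg _
  haveI : Nonempty (Fin m) := Fin.pos_iff_nonempty.mp hm
  haveI : Nonempty (Fin n) := Fin.pos_iff_nonempty.mp hn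
  choose imax himax using fun l : Fin k => Finite.exists_max fun i => U0 i l
  choose jmax hjmax using fun l : Fin k => Finite.exists_max fun j => V0 j l
  set α : Fin k → ℝ := fun l => U0 (imax l) l with hαdef
  set β : Fin k → ℝ := fun l => V0 (jmax l) l with hβdef
  have hα0 : ∀ l, 0 ≤ α l := fun l => hU0 _ _
  have hβ0 : ∀ l, 0 ≤ β l := fun l => hV0 _ _
  -- key bound
  have hkey : ∀ l, α l * β l ≤ 2 * frob M := by
    intro l
    by_contra h
    push_neg at h
    have hMle : M (imax l) (jmax l) ≤ frob M :=
      (le_abs_self _).trans (abs_entry_le_frob M _ _)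
    have hprod : α l * β l ≤ (U0 * V0ᵀ) (imax l) (jmax l) := by
      rw [Matrix.mul_apply]
      have := Finset.single_le_sum
        (f := fun l' => U0 (imax l) l' * V0ᵀ l' (jmax l))
        (fun l' _ => mul_nonneg (hU0 _ _) (hV0 _ _)) (Finset.mem_univ l)
      simpa using this
    have hfM : 0 ≤ frob M := frob_nonneg M
    have hE : (M - U0 * V0ᵀ) (imax l) (jmax l) < -(frob M) := by
      have hsub : (M - U0 * V0ᵀ) (imax l) (jmax l)
          = M (imax l) (jmax l) - (U0 * V0ᵀ) (imax l) (jmax l) := by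
        simp [Matrix.sub_apply]
      rw [hsub]; linarith
    have h1 : frob M < frob (M - U0 * V0ᵀ) := by
      have habs := abs_entry_le_frob (M - U0 * V0ᵀ) (imax l) (jmax l)
      have hneg := neg_le_abs ((M - U0 * V0ᵀ) (imax l) (jmax l))
      linarith
    have h2 : frob (M - U0 * V0ᵀ) ≤ frob M := by
      have := hbest 0 0 (fun _ _ => le_rfl) (fun _ _ => le_rfl)
      simpa using this
    linarith
  refine ⟨Matrix.of fun i l => if α l = 0 ∨ β l = 0 then 0 else Real.sqrt (β l / α l) * U0 i l,
          Matrix.of fun j l => if α l = 0 ∨ β l = 0 then 0 else Real.sqrt (α l / β l) * V0 j l,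
          ?_, ?_, ?_, ?_, ?_⟩
  · intro i l
    simp only [Matrix.of_apply]
    split
    · exact le_rfl
    · exact mul_nonneg (Real.sqrt_nonneg _) (hU0 _ _)
  · intro j l
    simp only [Matrix.of_apply]
    split
    · exact le_rfl
    · exact mul_nonneg (Real.sqrt_nonneg _) (hV0 _ _)
  · intro i l
    simp only [Matrix.of_apply]
    by_cases hc : α l = 0 ∨ β l = 0
    · rw [if_pos hc]; exact Real.sqrt_nonneg _
    · rw [if_neg hc]
      push_neg at hc
      have hαpos : 0 < α l := lt_of_le_of_ne (hα0 l) (Ne.symm hc.1)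
      have hβpos : 0 < β l := lt_of_le_of_ne (hβ0 l) (Ne.symm hc.2)
      have ht : 0 ≤ Real.sqrt (β l / α l) * U0 i l :=
        mul_nonneg (Real.sqrt_nonneg _) (hU0 _ _)
      rw [← Real.sqrt_sq ht]
      apply Real.sqrt_le_sqrt
      have hsq : (Real.sqrt (β l / α l) * U0 i l) ^ 2 = (β l / α l) * (U0 i l) ^ 2 := by
        rw [mul_pow, Real.sq_sqrt (div_nonneg (hβ0 l) (hα0 l))]
      rw [hsq]
      have hUle : (U0 i l) ^ 2 ≤ (α l) ^ 2 :=
        pow_le_pow_left₀ (hU0 _ _) (himax l i) 2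
      have h1 : (β l / α l) * (U0 i l) ^ 2 ≤ (β l / α l) * (α l) ^ 2 :=
        mul_le_mul_of_nonneg_left hUle (div_nonneg (hβ0 l) (hα0 l))
      have h2 : (β l / α l) * (α l) ^ 2 = α l * β l := by
        field_simp
      calc (β l / α l) * (U0 i l) ^ 2 ≤ (β l / α l) * (α l) ^ 2 := h1
        _ = α l * β l := h2
        _ ≤ 2 * frob M := hkey l
  · intro j l
    simp only [Matrix.of_apply]
    by_cases hc : α l = 0 ∨ β l = 0
    · rw [if_pos hc]; exact Real.sqrt_nonneg _
    · rw [if_neg hc]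
      push_neg at hc
      have hαpos : 0 < α l := lt_of_le_of_ne (hα0 l) (Ne.symm hc.1)
      have hβpos : 0 < β l := lt_of_le_of_ne (hβ0 l) (Ne.symm hc.2)
      have ht : 0 ≤ Real.sqrt (α l / β l) * V0 j l :=
        mul_nonneg (Real.sqrt_nonneg _) (hV0 _ _)
      rw [← Real.sqrt_sq ht]
      apply Real.sqrt_le_sqrt
      have hsq : (Real.sqrt (α l / β l) * V0 j l) ^ 2 = (α l / β l) * (V0 j l) ^ 2 := by
        rw [mul_pow, Real.sq_sqrt (div_nonneg (hα0 l) (hβ0 l))]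
      rw [hsq]
      have hVle : (V0 j l) ^ 2 ≤ (β l) ^ 2 :=
        pow_le_pow_left₀ (hV0 _ _) (hjmax l j) 2
      have h1 : (α l / β l) * (V0 j l) ^ 2 ≤ (α l / β l) * (β l) ^ 2 :=
        mul_le_mul_of_nonneg_left hVle (div_nonneg (hα0 l) (hβ0 l))
      have h2 : (α l / β l) * (β l) ^ 2 = α l * β l := by
        field_simp
      calc (α l / β l) * (V0 j l) ^ 2 ≤ (α l / β l) * (β l) ^ 2 := h1
        _ = α l * β l := h2
        _ ≤ 2 * frob M := hkey l
  · intro U V hU hV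
    have hprodeq :
        (Matrix.of fun i l => if α l = 0 ∨ β l = 0 then 0 else Real.sqrt (β l / α l) * U0 i l) *
        (Matrix.of fun j l => if α l = 0 ∨ β l = 0 then 0 else Real.sqrt (α l / β l) * V0 j l)ᵀ
        = U0 * V0ᵀ := by
      ext i j
      simp only [Matrix.mul_apply, Matrix.transpose_apply, Matrix.of_apply]
      apply Finset.sum_congr rfl
      intro l _
      by_cases hc : α l = 0 ∨ β l = 0
      · rw [if_pos hc, if_pos hc, zero_mul]
        rcases hc with h | h
        · have hz : U0 i l = 0 := le_antisymm (h ▸ himax l i) (hU0 _ _)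
          rw [hz, zero_mul]
        · have hz : V0 j l = 0 := le_antisymm (h ▸ hjmax l j) (hV0 _ _)
          rw [hz, mul_zero]
      · rw [if_neg hc, if_neg hc]
        push_neg at hc
        have hαne : α l ≠ 0 := hc.1
        have hβne : β l ≠ 0 := hc.2
        have hre : Real.sqrt (β l / α l) * U0 i l * (Real.sqrt (α l / β l) * V0 j l)
            = (Real.sqrt (β l / α l) * Real.sqrt (α l / β l)) * (U0 i l * V0 j l) := by ring
        rw [hre, ← Real.sqrt_mul (div_nonneg (hβ0 l) (hα0 l))]
        have hone : β l / α l * (α l / β l) = 1 := by field_simp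
        rw [hone, Real.sqrt_one, one_mul]
    rw [hprodeq]
    exact hbest U V hU hV
end
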